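/- arXiv:2002.07363 — 5 statements merged into one kernel-verified Lean document; each statement's English description precedes it below -/
import Mathlib

section
/- For every n ≥ 1 and every deterministic learning strategy for one-to-one matching markets of size n in the coarse query model, there exist a preference profile in which all n women have the same preference order over the men, and a run of the strategy against an adversary revealing valid blocking pairs under that profile, such that none of the first n(n−1)/2 matchings proposed by the strategy is stable. -/
/-- A preference profile in a one-to-one matching market of size `n`: for each woman
`w`, a rank permutation `P.w w` over the men (lower rank = more preferred), and for
each man `m`, a rank permutation `P.m m` over the women. -/
structure Prefs (n : ℕ) where
  w : Fin n → Equiv.Perm (Fin n)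
  m : Fin n → Equiv.Perm (Fin n)

/-- A matching is a bijection `M` from women to men.  The pair `(w, m)` blocks `M`
if `M w ≠ m`, woman `w` prefers `m` to her partner `M w`, and man `m` prefers `w`
to his partner `M.symm m`. -/
def Blocks {n : ℕ} (P : Prefs n) (M : Equiv.Perm (Fin n)) (w m : Fin n) : Prop :=
  M w ≠ m ∧ P.w w m < P.w w (M w) ∧ P.m m w < P.m m (M.symm m)

/-- A matching is stable if no pair blocks it. -/
def IsStable {n : ℕ} (P : Prefs n) (M : Equiv.Perm (Fin n)) : Prop :=
  ∀ w m : Fin n, ¬ Blocks P M w m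

/-- A history: a list of (proposed matching, revealed blocking pair) entries. -/
abbrev Hist (n : ℕ) := List (Equiv.Perm (Fin n) × (Fin n × Fin n))

/-- A deterministic learning strategy maps every history to a next proposed matching. -/
abbrev Strategy (n : ℕ) := Hist n → Equiv.Perm (Fin n)

/-- An adversary maps a history and a proposed matching to a revealed pair. -/
abbrev Adversary (n : ℕ) := Hist n → Equiv.Perm (Fin n) → Fin n × Fin n

/-- An adversary is valid for profile `P` if, whenever the proposed matching is
unstable, it reveals a blocking pair of that matching. -/
def ValidAdv {n : ℕ} (P : Prefs n) (adv : Adversary n) : Prop :=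
  ∀ (h : Hist n) (M : Equiv.Perm (Fin n)), ¬ IsStable P M →
    Blocks P M (adv h M).1 (adv h M).2

/-- The history after `t` rounds of the run of strategy `S` against adversary `adv`. -/
def runHist {n : ℕ} (S : Strategy n) (adv : Adversary n) : ℕ → Hist n
  | 0 => []
  | t + 1 =>
    let h := runHist S adv t
    h ++ [(S h, adv h (S h))]

/-- The `t`-th matching (0-indexed) proposed in the run of `S` against `adv`. -/
def proposal {n : ℕ} (S : Strategy n) (adv : Adversary n) (t : ℕ) :
    Equiv.Perm (Fin n) :=
  S (runHist S adv t)

/-!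
All women rank the men in the same order `0, 1, …, n-1`; the men's preferences are fixed only
after the run. Facing a matching `M`, the adversary reveals a pair `(w, m)` with `m < M w` such
that `m` has not rejected `w` so far, and records that `m` rejects his partner `M⁻¹ m`. If every
man ranks the women he never rejected first and the rejected ones by decreasing time of their
first rejection, every revealed pair blocks. Such a pair exists while fewer than `n(n-1)/2`
rejections are recorded, because the pairs `(m, w)` with `m < M w` number exactly `n(n-1)/2`.
-/

theorem List.IsPrefix.idxOf_lt_idxOf {α : Type*} [BEq α] [LawfulBEq α] {l₁ l₂ : List α}
    {x y : α} (hl : l₁ <+: l₂) (hx : x ∈ l₁) (hy : y ∉ l₁) : l₂.idxOf x < l₂.idxOf y := by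
  obtain ⟨l, rfl⟩ := hl
  rw [List.idxOf_append_of_mem hx, List.idxOf_append_of_notMem hy]
  exact (List.idxOf_lt_length_iff.2 hx).trans_le (Nat.le_add_right _ _)

theorem Tuple.sort_symm_lt_sort_symm {n : ℕ} {α : Type*} [LinearOrder α] (f : Fin n → α)
    {a b : Fin n} (hab : f a < f b) : (Tuple.sort f).symm a < (Tuple.sort f).symm b := by
  by_contra! hba
  have := Tuple.monotone_sort f hba
  simp only [Function.comp_apply, Equiv.apply_symm_apply] at this
  exact this.not_gt hab

namespace CoarseQuery

variable {n : ℕ}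

section Run

variable (S : Strategy n)

theorem runHist_length (adv : Adversary n) (t : ℕ) : (runHist S adv t).length = t := by
  induction t with
  | zero => rfl
  | succ t ih => simp [runHist, ih]

theorem runHist_isPrefix (adv : Adversary n) {s t : ℕ} (hst : s ≤ t) :
    runHist S adv s <+: runHist S adv t := by
  induction t, hst using Nat.le_induction with
  | base => exact List.prefix_refl _
  | succ t _ ih => exact ih.trans (List.prefix_append _ _)

theorem runHist_eq_of_agree {a b : Adversary n} {t : ℕ}
    (h : ∀ s < t, a (runHist S b s) (proposal S b s) = b (runHist S b s) (proposal S b s)) :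
    runHist S a t = runHist S b t := by
  induction t with
  | zero => rfl
  | succ t ih =>
    have hrun := ih fun s hs => h s (Nat.lt_succ_of_lt hs)
    have hstep : a (runHist S b t) (S (runHist S b t)) = b (runHist S b t) (S (runHist S b t)) :=
      h t (Nat.lt_succ_self t)
    simp only [runHist, hrun, hstep]

end Run

open Classical in
noncomputable def repair (P : Prefs n) (a : Adversary n) : Adversary n := fun h M =>
  if Blocks P M (a h M).1 (a h M).2 then a h M
  else if hb : ∃ p : Fin n × Fin n, Blocks P M p.1 p.2 then hb.choose else a h M

theorem validAdv_repair (P : Prefs n) (a : Adversary n) : ValidAdv P (repair P a) := by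
  intro h M hM
  have hb : ∃ p : Fin n × Fin n, Blocks P M p.1 p.2 := by
    simpa [IsStable] using hM
  unfold repair
  split_ifs with ha
  · exact ha
  · exact hb.choose_spec

theorem repair_eq_of_blocks {P : Prefs n} {a : Adversary n} {h : Hist n}
    {M : Equiv.Perm (Fin n)} (ha : Blocks P M (a h M).1 (a h M).2) : repair P a h M = a h M :=
  if_pos ha

/-- Woman `w` ranks man `m` at position `m`; man `m` ranks the women by decreasing position of
`(m, w)` in `L`, so that women never paired with him in `L` come first. -/
def rankingProfile (L : List (Fin n × Fin n)) : Prefs n where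
  w _ := 1
  m m := (Tuple.sort fun x => OrderDual.toDual (L.idxOf (m, x))).symm

theorem blocks_rankingProfile {L : List (Fin n × Fin n)} {M : Equiv.Perm (Fin n)}
    {w m : Fin n} (hlt : m < M w) (hidx : L.idxOf (m, M.symm m) < L.idxOf (m, w)) :
    Blocks (rankingProfile L) M w m :=
  ⟨hlt.ne', hlt, Tuple.sort_symm_lt_sort_symm _ (OrderDual.toDual_lt_toDual.2 hidx)⟩

/-- Round `(M, (w, m))` records that man `m` rejects his partner `M⁻¹ m`. -/
def rejections (h : Hist n) : List (Fin n × Fin n) :=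
  h.map fun e => (e.2.2, e.1.symm e.2.2)

def IsFresh (L : List (Fin n × Fin n)) (M : Equiv.Perm (Fin n)) (p : Fin n × Fin n) : Prop :=
  p.2 < M p.1 ∧ (p.2, p.1) ∉ L

theorem exists_isFresh (L : List (Fin n × Fin n)) (M : Equiv.Perm (Fin n))
    (hL : L.length < n * (n - 1) / 2) : ∃ p, IsFresh L M p := by
  by_contra! hno
  have hmem : ∀ q : Fin n × Fin n, q.1 < q.2 → (q.1, M.symm q.2) ∈ L := fun q hq => by
    by_contra hq'
    exact hno (M.symm q.2, q.1) ⟨by simpa using hq, hq'⟩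
  have hcard : (Finset.univ.filter fun q : Fin n × Fin n => q.1 < q.2).card ≤ L.toFinset.card :=
    Finset.card_le_card_of_injOn (fun q => (q.1, M.symm q.2))
      (fun q hq => List.mem_toFinset.2 (hmem q (Finset.mem_filter.1 hq).2))
      (fun q _ q' _ hqq' => by
        simp only [Prod.mk.injEq, EmbeddingLike.apply_eq_iff_eq] at hqq'
        exact Prod.ext hqq'.1 hqq'.2)
  rw [Fintype.card_product_filter_lt, Fintype.card_fin, Nat.choose_two_right] at hcard
  exact (hcard.trans L.toFinset_card_le).not_gt hL

open Classical in
noncomputable def freshAdv (hn : 1 ≤ n) : Adversary n := fun h M =>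
  if hp : ∃ p, IsFresh (rejections h) M p then hp.choose else (⟨0, hn⟩, ⟨0, hn⟩)

theorem isFresh_freshAdv (hn : 1 ≤ n) {h : Hist n} (hh : h.length < n * (n - 1) / 2)
    (M : Equiv.Perm (Fin n)) : IsFresh (rejections h) M (freshAdv hn h M) := by
  have hp := exists_isFresh (rejections h) M (by simpa [rejections] using hh)
  simp only [freshAdv, dif_pos hp]
  exact hp.choose_spec

theorem blocks_of_isFresh (S : Strategy n) (a : Adversary n) {t T : ℕ} (ht : t < T)
    (hfresh : IsFresh (rejections (runHist S a t)) (proposal S a t)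
      (a (runHist S a t) (proposal S a t))) :
    Blocks (rankingProfile (rejections (runHist S a T))) (proposal S a t)
      (a (runHist S a t) (proposal S a t)).1 (a (runHist S a t) (proposal S a t)).2 := by
  set M := proposal S a t
  set p := a (runHist S a t) M
  obtain ⟨hlt, hnew⟩ := hfresh
  have hsucc : rejections (runHist S a (t + 1)) =
      rejections (runHist S a t) ++ [(p.2, M.symm p.2)] := by
    simp [runHist, rejections, p, M, proposal]
  have hpre : rejections (runHist S a (t + 1)) <+: rejections (runHist S a T) :=
    (runHist_isPrefix S a ht).map _
  refine blocks_rankingProfile hlt (hpre.idxOf_lt_idxOf ?_ ?_)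
  · simp [hsucc]
  · simp only [hsucc, List.mem_append, List.mem_singleton, Prod.mk.injEq, true_and, not_or]
    exact ⟨hnew, fun h => hlt.ne' (by simp [h])⟩

end CoarseQuery

open CoarseQuery in
/-- for every `n ≥ 1` and every deterministic learning strategy for
one-to-one matching markets of size `n` in the coarse query model, there exist a
preference profile in which all women share the same preference order over the men,
and a valid adversary for that profile, such that none of the first `n(n−1)/2`
matchings proposed by the strategy in the resulting run is stable. -/
theorem stmt7 (n : ℕ) (hn : 1 ≤ n) (S : Strategy n) :
    ∃ P : Prefs n, (∀ w w' : Fin n, P.w w = P.w w') ∧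
      ∃ adv : Adversary n, ValidAdv P adv ∧
        ∀ t : ℕ, t < n * (n - 1) / 2 → ¬ IsStable P (proposal S adv t) := by
  set N := n * (n - 1) / 2
  set P := rankingProfile (rejections (runHist S (freshAdv hn) N))
  have hblocks (t : ℕ) (ht : t < N) := blocks_of_isFresh S (freshAdv hn) ht
    (isFresh_freshAdv hn (by rwa [runHist_length]) _)
  have hrun : ∀ t < N, proposal S (repair P (freshAdv hn)) t = proposal S (freshAdv hn) t :=
    fun t ht => congrArg S <| runHist_eq_of_agree S fun s hs =>
      repair_eq_of_blocks (hblocks s (hs.trans ht))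
  refine ⟨P, fun _ _ => rfl, repair P (freshAdv hn), validAdv_repair P _, fun t ht hstable => ?_⟩
  rw [hrun t ht] at hstable
  exact hstable _ _ (hblocks t ht)
end

section
/- For every n ≥ 3 that is divisible by 3, there exist: a fixed common preference order shared by all n women; a probability distribution over the men's preference profiles under which each man's preference order over the women is drawn independently and uniformly at random from all n! linear orders; and an adversary (a response rule which, as a function of the realized preference profile and the history, reveals a valid blocking pair of the proposed matching whenever that matching is unstable) such that for every deterministic learning strategy for one-to-one matching markets of size n in the coarse query model, the expected number of matchings proposed before a stable matching is proposed is at least n²/9. -/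
/-!
All women rank the men by index, so the only stable matching is serial dictatorship: man `0`
takes his favourite woman, man `1` his favourite among the others, and so on. The adversary
answers an unstable proposal with the first man `K` who does not hold his serial-dictatorship
partner, together with the woman ranked just above his partner in his list restricted to the
women left for him.

Fix `K` and the lists of the other men. A proposal that matches men `0, …, K - 1` correctly is a
guess of `K`'s favourite among the `n - K` women left for him; a wrong guess reveals one
adjacency of his order on these women, and the other proposals reveal nothing about him. The
orders consistent with `i` revealed adjacencies are closed under the cyclic rotations of the
ranks that do not split one of them, so the next guess is right with conditional probability at
most `1 / (n - K - i)`. Hence `K` is the first mismatched man in at least `(n - K - 1) / 2`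
rounds on average, and summing over `K` gives at least `n (n - 1) / 4 ≥ n² / 9` rounds.
-/

namespace CoarseQueryLowerBound

open Finset

section Counting

lemma nth_spec_of_le_count {p : ℕ → Prop} [DecidablePred p] {i N : ℕ} (hN : p N)
    (hi : i ≤ Nat.count p N) :
    p (Nat.nth p i) ∧ Nat.count p (Nat.nth p i) = i ∧ Nat.nth p i ≤ N := by
  rcases hi.lt_or_eq with hlt | rfl
  · have hcard (hf : (Set.ofPred p).Finite) : i < #hf.toFinset :=
      hlt.trans_le (Nat.count_le_card hf N)
    exact ⟨Nat.nth_mem i hcard, Nat.count_nth hcard, (Nat.nth_lt_of_lt_count hlt).le⟩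
  · rw [Nat.nth_count hN]
    exact ⟨hN, rfl, le_rfl⟩

lemma mul_card_le_of_forall_fiber {ι κ : Type*} [DecidableEq κ] {A B : Finset ι} (hBA : B ⊆ A)
    (f : ι → κ) (c : ℕ)
    (h : ∀ a ∈ A, c * #{x ∈ A | f x = f a} ≤ c * #{x ∈ B | f x = f a} + #{x ∈ A | f x = f a}) :
    c * #A ≤ c * #B + #A := by
  rw [card_eq_sum_card_fiberwise (t := A.image f) fun x hx => mem_image_of_mem f hx,
    card_eq_sum_card_fiberwise (s := B) (t := A.image f) fun x hx => mem_image_of_mem f (hBA hx),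
    mul_sum, mul_sum, ← sum_add_distrib]
  refine sum_le_sum fun y hy => ?_
  obtain ⟨a, ha, rfl⟩ := mem_image.1 hy
  exact h a ha

/-- If, among the survivors of level `i`, at most a `1 / (m - i)` fraction fails to survive
level `i + 1`, then a `(m - i) / m` fraction survives level `i`. -/
lemma mul_le_mul_of_hazard {a : ℕ → ℕ} {m N : ℕ} (h0 : N ≤ a 0)
    (hstep : ∀ i < m, (m - i) * a i ≤ (m - i) * a (i + 1) + a i) (i : ℕ) :
    (m - i) * N ≤ m * a i := by
  induction i with
  | zero => simpa using Nat.mul_le_mul_left m h0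
  | succ i ih =>
    rcases lt_or_ge i m with hi | hi
    · have hs := hstep i hi
      have hs' : (m - (i + 1)) * a i ≤ (m - i) * a (i + 1) := by
        have : m - i = m - (i + 1) + 1 := by omega
        rw [this] at hs ⊢
        linarith
      refine Nat.le_of_mul_le_mul_left ?_ (Nat.sub_pos_of_lt hi)
      calc (m - i) * ((m - (i + 1)) * N) = (m - (i + 1)) * ((m - i) * N) := by ring
        _ ≤ (m - (i + 1)) * (m * a i) := Nat.mul_le_mul_left _ ih
        _ = m * ((m - (i + 1)) * a i) := by ring
        _ ≤ m * ((m - i) * a (i + 1)) := Nat.mul_le_mul_left _ hs'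
        _ = (m - i) * (m * a (i + 1)) := by ring
    · simp [show m - (i + 1) = 0 by omega]

lemma sum_range_card_filter_le_sum {ι : Type*} (s : Finset ι) (G : ι → ℕ) (m : ℕ) :
    ∑ i ∈ range m, #{x ∈ s | i + 1 ≤ G x} ≤ ∑ x ∈ s, G x := by
  simp only [card_filter]
  rw [sum_comm]
  refine sum_le_sum fun x _ => ?_
  rw [← card_filter]
  calc #{i ∈ range m | i + 1 ≤ G x} ≤ #(range (G x)) :=
        card_le_card fun i hi => by simp only [mem_filter, mem_range] at hi ⊢; omega
    _ = G x := card_range _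

/-- The expected level reached when level `i + 1` is lost with conditional probability at most
`1 / (m - i)` is at least `(m - 1) / 2`. -/
lemma card_mul_le_two_mul_sum_of_hazard {ι : Type*} (s : Finset ι) (G : ι → ℕ) (m : ℕ)
    (hstep : ∀ i < m, (m - i) * #{x ∈ s | i ≤ G x}
      ≤ (m - i) * #{x ∈ s | i + 1 ≤ G x} + #{x ∈ s | i ≤ G x}) :
    #s * (m - 1) ≤ 2 * ∑ x ∈ s, G x := by
  rcases Nat.eq_zero_or_pos m with rfl | hm
  · simp
  have hsurv := mul_le_mul_of_hazard (a := fun i => #{x ∈ s | i ≤ G x}) (N := #s)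
    (by simp) hstep
  have hreflect : 2 * ∑ i ∈ range m, (m - (i + 1)) = m * (m - 1) := by
    rw [mul_comm, ← sum_range_id_mul_two, ← sum_range_reflect (fun i => i) m]
    exact congrArg (· * 2) (sum_congr rfl fun i _ => by omega)
  refine Nat.le_of_mul_le_mul_left ?_ hm
  calc m * (#s * (m - 1)) = 2 * ∑ i ∈ range m, (m - (i + 1)) * #s := by
        rw [← sum_mul, ← mul_assoc 2, hreflect]
        ring
    _ ≤ 2 * ∑ i ∈ range m, m * #{x ∈ s | i + 1 ≤ G x} :=
        Nat.mul_le_mul_left _ (sum_le_sum fun i _ => hsurv (i + 1))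
    _ ≤ m * (2 * ∑ x ∈ s, G x) := by
        rw [← mul_sum, mul_left_comm]
        exact Nat.mul_le_mul_left _ (Nat.mul_le_mul_left _ (sum_range_card_filter_le_sum s G m))

lemma eq_of_add_mod_eq {m a b c : ℕ} (ha : a < m) (hb : b < m)
    (h : (a + c) % m = (b + c) % m) : a = b := by
  have := Nat.ModEq.add_right_cancel' c h
  rwa [Nat.ModEq, Nat.mod_eq_of_lt ha, Nat.mod_eq_of_lt hb] at this

lemma add_one_mod_of_ne {m x : ℕ} (hx : x + 1 < 2 * m) (hne : x ≠ m - 1) :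
    (x + 1) % m = x % m + 1 := by
  rcases lt_or_ge x m with h | h
  · rw [Nat.mod_eq_of_lt h, Nat.mod_eq_of_lt (by omega)]
  · rw [Nat.mod_eq_sub_mod h, Nat.mod_eq_sub_mod (by omega), Nat.mod_eq_of_lt (by omega),
      Nat.mod_eq_of_lt (by omega)]
    omega

lemma sub_length_le_card_filter_add_ne {γ : Type*} (m : ℕ) (F : List γ) (r : γ → ℕ) :
    m - F.length ≤ #{c ∈ range m | ∀ f ∈ F, r f + c ≠ m - 1} := by
  classical
  have hbad : #{c ∈ range m | ¬ ∀ f ∈ F, r f + c ≠ m - 1} ≤ F.length := by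
    calc _ ≤ #(F.toFinset.image fun f => m - 1 - r f) :=
          card_le_card fun c hc => by
            simp only [mem_filter, not_forall, not_not] at hc
            obtain ⟨-, f, hf, hfc⟩ := hc
            exact mem_image.2 ⟨f, List.mem_toFinset.2 hf, by omega⟩
      _ ≤ F.length := card_image_le.trans F.toFinset_card_le
  have := card_filter_add_card_filter_not (s := range m) fun c => ∀ f ∈ F, r f + c ≠ m - 1
  rw [card_range] at this
  omega

end Counting

section RelativeRank

variable {α β : Type*} [LinearOrder β]

def relRank (p : α ≃ β) (V : Finset α) (v : α) : ℕ := #{c ∈ V | p c < p v}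

variable {p : α ≃ β} {V : Finset α} {a b v : α}

lemma relRank_lt_card (hv : v ∈ V) : relRank p V v < #V :=
  card_lt_card <| filter_ssubset.2 ⟨v, hv, lt_irrefl _⟩

lemma relRank_mono (hab : p a ≤ p b) : relRank p V a ≤ relRank p V b :=
  card_le_card fun _ hc => by
    rw [mem_filter] at hc ⊢
    exact ⟨hc.1, hc.2.trans_le hab⟩

lemma relRank_lt_relRank (ha : a ∈ V) (hab : p a < p b) : relRank p V a < relRank p V b :=
  card_lt_card ⟨fun _ hc => by
      rw [mem_filter] at hc ⊢
      exact ⟨hc.1, hc.2.trans hab⟩,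
    fun h => lt_irrefl (p a) (mem_filter.1 (h (mem_filter.2 ⟨ha, hab⟩))).2⟩

lemma relRank_lt_relRank_iff (ha : a ∈ V) : relRank p V a < relRank p V b ↔ p a < p b :=
  ⟨fun h => lt_of_not_ge fun hba => (relRank_mono hba).not_gt h, relRank_lt_relRank ha⟩

lemma relRank_injOn : Set.InjOn (relRank p V) V := by
  intro a ha b hb h
  rcases lt_trichotomy (p a) (p b) with hab | hab | hab
  · exact absurd h (relRank_lt_relRank ha hab).ne
  · exact p.injective hab
  · exact absurd h (relRank_lt_relRank hb hab).ne'

lemma exists_relRank_eq {j : ℕ} (hj : j < #V) : ∃ v, v ∈ V ∧ relRank p V v = j := by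
  obtain ⟨v, hv, hvj⟩ := surj_on_of_inj_on_of_card_le (t := range #V) (fun v _ => relRank p V v)
    (fun _ hv => mem_range.2 (relRank_lt_card hv)) (fun _ _ ha hb h => relRank_injOn ha hb h)
    (card_range _).le j (mem_range.2 hj)
  exact ⟨v, hv, hvj.symm⟩

def IsImmPred (p : α ≃ β) (V : Finset α) (b a : α) : Prop :=
  b ∈ V ∧ a ∈ V ∧ relRank p V b + 1 = relRank p V a

lemma IsImmPred.lt (h : IsImmPred p V b a) : p b < p a :=
  (relRank_lt_relRank_iff h.1).1 (h.2.2 ▸ Nat.lt_succ_self _)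

lemma relRank_equiv_trans {σ : Equiv.Perm α} (hσ : ∀ v ∈ V, σ v ∈ V) (v : α) :
    relRank (σ.trans p) V v = relRank p V (σ v) := by
  have hV : V.map σ.toEmbedding = V := eq_of_subset_of_card_le
    (fun _ hx => by obtain ⟨y, hy, rfl⟩ := mem_map.1 hx; exact hσ y hy) (card_map _).ge
  calc relRank (σ.trans p) V v = #((V.filter fun c => p (σ c) < p (σ v)).map σ.toEmbedding) :=
        (card_map _).symm
    _ = #((V.map σ.toEmbedding).filter fun d => p d < p (σ v)) := by rw [filter_map]; rfl
    _ = relRank p V (σ v) := by rw [hV, relRank]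

/-- Junk (an arbitrary element) when `#V ≤ j`. -/
noncomputable def nthRel [Nonempty α] (p : α ≃ β) (V : Finset α) (j : ℕ) : α :=
  Classical.epsilon fun v => v ∈ V ∧ relRank p V v = j

variable [Nonempty α]

lemma nthRel_spec {j : ℕ} (hj : j < #V) : nthRel p V j ∈ V ∧ relRank p V (nthRel p V j) = j :=
  Classical.epsilon_spec (exists_relRank_eq hj)

lemma nthRel_relRank (hv : v ∈ V) : nthRel p V (relRank p V v) = v :=
  relRank_injOn (nthRel_spec (relRank_lt_card hv)).1 hv (nthRel_spec (relRank_lt_card hv)).2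

lemma nthRel_congr {p' : α ≃ β} (h : ∀ v ∈ V, relRank p V v = relRank p' V v) :
    nthRel p V = nthRel p' V := by
  funext j
  refine congrArg Classical.epsilon (funext fun v => propext ?_)
  exact ⟨fun ⟨hv, hj⟩ => ⟨hv, (h v hv).symm.trans hj⟩, fun ⟨hv, hj⟩ => ⟨hv, (h v hv).trans hj⟩⟩

lemma relRank_eq_zero_iff (hv : v ∈ V) : relRank p V v = 0 ↔ v = nthRel p V 0 := by
  refine ⟨fun h => h ▸ (nthRel_relRank hv).symm, ?_⟩
  rintro rfl
  exact (nthRel_spec (card_pos.2 ⟨_, hv⟩)).2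

noncomputable def immPred (p : α ≃ β) (V : Finset α) (v : α) : α :=
  nthRel p V (relRank p V v - 1)

lemma isImmPred_immPred (hv : v ∈ V) (h0 : relRank p V v ≠ 0) :
    IsImmPred p V (immPred p V v) v := by
  have hlt := relRank_lt_card (p := p) hv
  obtain ⟨hmem, hrank⟩ := nthRel_spec (p := p) (V := V) (j := relRank p V v - 1) (by omega)
  exact ⟨hmem, hv, by rw [immPred, hrank]; omega⟩

lemma IsImmPred.immPred_eq (h : IsImmPred p V b a) : immPred p V a = b := by
  rw [immPred, ← h.2.2, Nat.add_sub_cancel, nthRel_relRank h.1]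

end RelativeRank

section Rotation

variable {α β : Type*} [LinearOrder β] [Nonempty α] [DecidableEq α] {p : α ≃ β} {V : Finset α}

noncomputable def rotateFun (p : α ≃ β) (V : Finset α) (c : ℕ) (v : α) : α :=
  if v ∈ V then nthRel p V ((relRank p V v + c) % #V) else v

lemma rotateFun_spec {c : ℕ} {v : α} (hv : v ∈ V) :
    rotateFun p V c v ∈ V ∧ relRank p V (rotateFun p V c v) = (relRank p V v + c) % #V := by
  rw [rotateFun, if_pos hv]
  exact nthRel_spec (Nat.mod_lt _ (card_pos.2 ⟨v, hv⟩))

lemma rotateFun_injective (c : ℕ) : Function.Injective (rotateFun p V c) := by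
  intro a b hab
  by_cases ha : a ∈ V <;> by_cases hb : b ∈ V
  · have h := congrArg (relRank p V) hab
    rw [(rotateFun_spec ha).2, (rotateFun_spec hb).2] at h
    exact relRank_injOn ha hb (eq_of_add_mod_eq (relRank_lt_card ha) (relRank_lt_card hb) h)
  · have := (rotateFun_spec (p := p) (c := c) ha).1
    rw [hab, rotateFun, if_neg hb] at this
    exact absurd this hb
  · have := (rotateFun_spec (p := p) (c := c) hb).1
    rw [← hab, rotateFun, if_neg ha] at this
    exact absurd this ha
  · rwa [rotateFun, if_neg ha, rotateFun, if_neg hb] at hab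

variable [Finite α]

/-- Shifts the relative ranks of the elements of `V` cyclically by `c`; the rest is unchanged. -/
noncomputable def rotate (p : α ≃ β) (V : Finset α) (c : ℕ) : α ≃ β :=
  (Equiv.ofBijective _
    (Finite.injective_iff_bijective.1 (rotateFun_injective (p := p) (V := V) c))).trans p

lemma rotate_apply (c : ℕ) (v : α) : rotate p V c v = p (rotateFun p V c v) := rfl

lemma relRank_rotate {c : ℕ} {v : α} (hv : v ∈ V) :
    relRank (rotate p V c) V v = (relRank p V v + c) % #V := by
  rw [rotate, relRank_equiv_trans (fun _ hu => (rotateFun_spec hu).1)]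
  exact (rotateFun_spec hv).2

lemma rotate_injective (c : ℕ) : Function.Injective fun p : α ≃ β => rotate p V c := by
  intro p p' h
  have hrank : ∀ v ∈ V, relRank p V v = relRank p' V v := fun v hv =>
    eq_of_add_mod_eq (relRank_lt_card hv) (relRank_lt_card hv) (c := c) <| by
      rw [← relRank_rotate hv, ← relRank_rotate hv]
      exact congrArg (relRank · V v) h
  have hfun : rotateFun p V c = rotateFun p' V c := by
    funext v
    unfold rotateFun
    split_ifs with hv
    · rw [hrank v hv, nthRel_congr hrank]
    · rfl
  ext x
  obtain ⟨y, rfl⟩ := Finite.injective_iff_surjective.1 (rotateFun_injective (p := p) (V := V) c) x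
  have := congrArg (fun e : α ≃ β => e y) h
  simp only [rotate_apply] at this
  rwa [hfun] at this ⊢

end Rotation

section Hazard

variable {α β : Type*} [LinearOrder β] [Nonempty α] [DecidableEq α] {p : α ≃ β} {V : Finset α}

def ImmPredsHold (p : α ≃ β) (V : Finset α) (F : List (α × α)) : Prop :=
  ∀ f ∈ F, IsImmPred p V f.1 f.2

lemma immPredsHold_rotate [Finite α] {F : List (α × α)} (h : ImmPredsHold p V F) {c : ℕ}
    (hc : c < #V) (hwrap : ∀ f ∈ F, relRank p V f.1 + c ≠ #V - 1) :
    ImmPredsHold (rotate p V c) V F := by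
  intro f hf
  obtain ⟨hb, ha, hba⟩ := h f hf
  refine ⟨hb, ha, ?_⟩
  have := relRank_lt_card (p := p) hb
  rw [relRank_rotate hb, relRank_rotate ha, ← hba, add_right_comm,
    add_one_mod_of_ne (by omega) (hwrap f hf)]

open scoped Classical in
/-- Given `#F` facts of the form "`b` comes immediately before `a` in `V`", a prescribed element
is ranked first in at most a `1 / (#V - #F)` fraction of the orders satisfying them: the `#V`
cyclic rotations of such an order keep all facts except the at most `#F` rotations that split
one of them across the ends. -/
theorem card_sub_length_mul_card_le [Fintype α] [Fintype β] (F : List (α × α)) {x : α}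
    (hx : x ∈ V) :
    (#V - F.length) * #{p : α ≃ β | ImmPredsHold p V F ∧ relRank p V x = 0}
      ≤ #{p : α ≃ β | ImmPredsHold p V F} := by
  set A : Finset (α ≃ β) := {p | ImmPredsHold p V F ∧ relRank p V x = 0}
  let good (p : α ≃ β) : Finset ℕ := {c ∈ range #V | ∀ f ∈ F, relRank p V f.1 + c ≠ #V - 1}
  have hgood (p : α ≃ β) : #V - F.length ≤ #(good p) := by
    convert sub_length_le_card_filter_add_ne (#V) F fun f => relRank p V f.1
  calc (#V - F.length) * #A ≤ ∑ p ∈ A, #(good p) := by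
        rw [mul_comm, ← smul_eq_mul, ← sum_const]
        exact sum_le_sum fun p _ => hgood p
    _ = #(A.sigma good) := (card_sigma _ _).symm
    _ ≤ #{p : α ≃ β | ImmPredsHold p V F} := by
      refine card_le_card_of_injOn (fun pc => rotate pc.1 V pc.2) ?_ ?_
      · rintro ⟨p, c⟩ hpc
        simp only [coe_sigma, Set.mem_sigma_iff, mem_coe, A, good, mem_filter, mem_range,
          mem_univ, true_and] at hpc ⊢
        exact immPredsHold_rotate hpc.1.1 hpc.2.1 hpc.2.2
      · rintro ⟨p, c⟩ hpc ⟨p', c'⟩ hpc' h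
        simp only [coe_sigma, Set.mem_sigma_iff, mem_coe, A, good, mem_filter, mem_range,
          mem_univ, true_and] at hpc hpc' h
        have hc : c = c' := by
          have := congrArg (relRank · V x) h
          rwa [relRank_rotate hx, relRank_rotate hx, hpc.1.2, hpc'.1.2, zero_add, zero_add,
            Nat.mod_eq_of_lt hpc.2.1, Nat.mod_eq_of_lt hpc'.2.1] at this
        subst hc
        rw [rotate_injective c h]

end Hazard

section SerialDictatorship

variable {n : ℕ} {mp mp' : Fin n → Equiv.Perm (Fin n)} {M : Equiv.Perm (Fin n)}

/-- Men are indexed by `ℕ` here so that the recursion below can run up to `n`. -/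
def manPref (mp : Fin n → Equiv.Perm (Fin n)) (k : ℕ) : Equiv.Perm (Fin n) :=
  if h : k < n then mp ⟨k, h⟩ else 1

@[simp]
lemma manPref_val (j : Fin n) : manPref mp j = mp j := by
  simp [manPref]

/-- Every woman ranks the men by index: man `0` first. -/
def indexPrefs (mp : Fin n → Equiv.Perm (Fin n)) : Prefs n := ⟨fun _ => 1, mp⟩

lemma blocks_indexPrefs_iff {w m : Fin n} :
    Blocks (indexPrefs mp) M w m ↔ M w ≠ m ∧ m < M w ∧ mp m w < mp m (M.symm m) := by
  simp [Blocks, indexPrefs]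

variable [NeZero n]

/-- Serial dictatorship in the order of the men's indices: `remaining mp k` is the set of women
left when man `k` chooses. -/
noncomputable def remaining (mp : Fin n → Equiv.Perm (Fin n)) : ℕ → Finset (Fin n)
  | 0 => univ
  | k + 1 => (remaining mp k).erase (nthRel (manPref mp k) (remaining mp k) 0)

noncomputable def sdMatch (mp : Fin n → Equiv.Perm (Fin n)) (k : ℕ) : Fin n :=
  nthRel (manPref mp k) (remaining mp k) 0

lemma remaining_succ (k : ℕ) : remaining mp (k + 1) = (remaining mp k).erase (sdMatch mp k) :=
  rfl

lemma card_remaining {k : ℕ} (hk : k ≤ n) : #(remaining mp k) = n - k := by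
  induction k with
  | zero => simp [remaining]
  | succ k ih =>
    have hcard := ih (by omega)
    have hmem : sdMatch mp k ∈ remaining mp k := (nthRel_spec (by rw [hcard]; omega)).1
    rw [remaining_succ, card_erase_of_mem hmem, hcard]
    omega

lemma sdMatch_mem {k : ℕ} (hk : k < n) : sdMatch mp k ∈ remaining mp k :=
  (nthRel_spec (by rw [card_remaining hk.le]; omega)).1

lemma manPref_sdMatch_lt {k : ℕ} (hk : k < n) {w : Fin n} (hw : w ∈ remaining mp k)
    (hne : w ≠ sdMatch mp k) : manPref mp k (sdMatch mp k) < manPref mp k w := by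
  rw [← relRank_lt_relRank_iff (sdMatch_mem hk), (relRank_eq_zero_iff (sdMatch_mem hk)).2 rfl]
  exact Nat.pos_of_ne_zero fun h => hne ((relRank_eq_zero_iff hw).1 h)

lemma mem_remaining_iff {k : ℕ} {w : Fin n} : w ∈ remaining mp k ↔ ∀ j < k, sdMatch mp j ≠ w := by
  induction k with
  | zero => simp [remaining]
  | succ k ih =>
    rw [remaining_succ, mem_erase, ih, ne_comm]
    constructor
    · rintro ⟨hk, hlt⟩ j hj
      rcases Nat.lt_succ_iff_lt_or_eq.1 hj with hj | rfl
      exacts [hlt j hj, hk]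
    · exact fun h => ⟨h k k.lt_succ_self, fun j hj => h j (hj.trans k.lt_succ_self)⟩

lemma remaining_congr {k : ℕ} (h : ∀ j : Fin n, ↑j < k → mp j = mp' j) :
    remaining mp k = remaining mp' k := by
  induction k with
  | zero => rfl
  | succ k ih =>
    have hpref : manPref mp k = manPref mp' k := by
      unfold manPref
      split_ifs with hk
      exacts [h ⟨k, hk⟩ k.lt_succ_self, rfl]
    rw [remaining_succ, remaining_succ, sdMatch, sdMatch, hpref,
      ih fun j hj => h j (hj.trans k.lt_succ_self)]

lemma sdMatch_congr {k : ℕ} (h : ∀ j : Fin n, ↑j ≤ k → mp j = mp' j) :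
    sdMatch mp k = sdMatch mp' k := by
  have hpref : manPref mp k = manPref mp' k := by
    unfold manPref
    split_ifs with hk
    exacts [h ⟨k, hk⟩ le_rfl, rfl]
  rw [sdMatch, sdMatch, hpref, remaining_congr fun j hj => h j hj.le]

lemma mem_remaining_of_prefix {j : Fin n} (hpre : ∀ i < j, M.symm i = sdMatch mp i) {w : Fin n}
    (hw : j ≤ M w) : w ∈ remaining mp j := by
  refine mem_remaining_iff.2 fun i hi hiw => ?_
  have hi' : (⟨i, hi.trans j.isLt⟩ : Fin n) < j := hi
  rw [← hpre _ hi', Equiv.symm_apply_eq] at hiw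
  exact absurd (hiw ▸ hw) (not_le.2 hi')

lemma isStable_of_forall_sdMatch (h : ∀ j : Fin n, M.symm j = sdMatch mp j) :
    IsStable (indexPrefs mp) M := by
  intro w m hb
  obtain ⟨hne, hlt, hpref⟩ := blocks_indexPrefs_iff.1 hb
  have hw : w ∈ remaining mp m := mem_remaining_of_prefix (fun i _ => h i) hlt.le
  have hsd : w ≠ sdMatch mp m := by
    rw [← h m]
    exact fun hw => hne (by rw [hw, Equiv.apply_symm_apply])
  have := manPref_sdMatch_lt m.isLt hw hsd
  rw [manPref_val, ← h m] at this
  exact lt_asymm hpref this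

lemma sdMatch_eq_of_lt {K : Fin n} (hagree : ∀ j < K, mp j = mp' j) {i : ℕ} (hi : i < K) :
    sdMatch mp i = sdMatch mp' i :=
  sdMatch_congr fun j hj => hagree j (Fin.lt_def.2 (by omega))

lemma remaining_eq_of_le {K : Fin n} (hagree : ∀ j < K, mp j = mp' j) {i : ℕ} (hi : i ≤ K) :
    remaining mp i = remaining mp' i :=
  remaining_congr fun j hj => hagree j (Fin.lt_def.2 (by omega))

end SerialDictatorship

section Adversary

variable {n : ℕ} [NeZero n] {mp mp' : Fin n → Equiv.Perm (Fin n)} {M : Equiv.Perm (Fin n)}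
  {j K : Fin n}

open scoped Classical in
noncomputable def firstMismatch (mp : Fin n → Equiv.Perm (Fin n)) (M : Equiv.Perm (Fin n)) :
    Option (Fin n) :=
  if h : ∃ j : Fin n, M.symm j ≠ sdMatch mp j then some (Fin.find _ h) else none

lemma firstMismatch_eq_some_iff :
    firstMismatch mp M = some j ↔ M.symm j ≠ sdMatch mp j ∧ ∀ i < j, M.symm i = sdMatch mp i := by
  unfold firstMismatch
  split_ifs with h
  · simp only [Option.some_inj, Fin.find_eq_iff, ne_eq, not_not]
  · simp only [not_exists, not_not] at h
    simp [h]

lemma firstMismatch_eq_none_iff : firstMismatch mp M = none ↔ ∀ j, M.symm j = sdMatch mp j := by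
  unfold firstMismatch
  split_ifs with h <;> simp_all

noncomputable def adversary (mp : Fin n → Equiv.Perm (Fin n)) : Adversary n := fun _ M =>
  match firstMismatch mp M with
  | some j => (immPred (mp j) (remaining mp j) (M.symm j), j)
  | none => (0, 0)

lemma adversary_of_firstMismatch (h : firstMismatch mp M = some j) (hist : Hist n) :
    adversary mp hist M = (immPred (mp j) (remaining mp j) (M.symm j), j) := by
  simp [adversary, h]

lemma isImmPred_of_firstMismatch (h : firstMismatch mp M = some j) :
    IsImmPred (mp j) (remaining mp j) (immPred (mp j) (remaining mp j) (M.symm j)) (M.symm j) := by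
  obtain ⟨hbad, hpre⟩ := firstMismatch_eq_some_iff.1 h
  have hmem : M.symm j ∈ remaining mp j := mem_remaining_of_prefix hpre (by simp)
  refine isImmPred_immPred hmem fun h0 => hbad ?_
  rw [relRank_eq_zero_iff hmem] at h0
  rw [h0, sdMatch, manPref_val]

lemma blocks_of_firstMismatch (h : firstMismatch mp M = some j) :
    Blocks (indexPrefs mp) M (immPred (mp j) (remaining mp j) (M.symm j)) j := by
  have hpred := isImmPred_of_firstMismatch h
  set b := immPred (mp j) (remaining mp j) (M.symm j)
  have hMb : M b ≠ j := fun hb => (hpred.lt).ne (by rw [← hb, Equiv.symm_apply_apply])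
  refine blocks_indexPrefs_iff.2 ⟨hMb, lt_of_le_of_ne (not_lt.1 fun hlt => ?_) hMb.symm, hpred.lt⟩
  have hsd := (firstMismatch_eq_some_iff.1 h).2 _ hlt
  rw [Equiv.symm_apply_apply] at hsd
  exact mem_remaining_iff.1 hpred.1 _ hlt hsd.symm

lemma isStable_iff : IsStable (indexPrefs mp) M ↔ ∀ j : Fin n, M.symm j = sdMatch mp j := by
  refine ⟨fun hst => firstMismatch_eq_none_iff.1 ?_, isStable_of_forall_sdMatch⟩
  cases h : firstMismatch mp M with
  | none => rfl
  | some j => exact absurd (blocks_of_firstMismatch h) (hst _ _)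

lemma adversary_valid : ValidAdv (indexPrefs mp) (adversary mp) := by
  intro hist M hM
  cases h : firstMismatch mp M with
  | none => exact absurd (isStable_iff.2 (firstMismatch_eq_none_iff.1 h)) hM
  | some j =>
    rw [adversary_of_firstMismatch h]
    exact blocks_of_firstMismatch h

lemma adversary_congr (hagree : ∀ j < K, mp j = mp' j) (hbad : ∃ j < K, M.symm j ≠ sdMatch mp j)
    (hist hist' : Hist n) : adversary mp hist M = adversary mp' hist' M := by
  obtain ⟨j, hjK, hj⟩ := hbad
  obtain ⟨j₀, h₀⟩ := Option.ne_none_iff_exists'.1 fun h => hj (firstMismatch_eq_none_iff.1 h j)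
  obtain ⟨hbad₀, hpre₀⟩ := firstMismatch_eq_some_iff.1 h₀
  have hj₀K : j₀ < K := lt_of_le_of_lt (not_lt.1 fun h => hj (hpre₀ j h)) hjK
  have h₀' : firstMismatch mp' M = some j₀ := by
    refine firstMismatch_eq_some_iff.2 ⟨?_, fun i hi => ?_⟩
    · rwa [← sdMatch_eq_of_lt hagree hj₀K]
    · rw [← sdMatch_eq_of_lt hagree (hi.trans hj₀K)]
      exact hpre₀ i hi
  rw [adversary_of_firstMismatch h₀, adversary_of_firstMismatch h₀', hagree j₀ hj₀K,
    remaining_eq_of_le hagree hj₀K.le]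

end Adversary

section Runs

variable {n : ℕ} (S : Strategy n) (adv : Adversary n)

lemma length_runHist (t : ℕ) : (runHist S adv t).length = t := by
  induction t with
  | zero => rfl
  | succ t ih => simp [runHist, ih]

lemma runHist_take {s t : ℕ} (h : s ≤ t) : (runHist S adv t).take s = runHist S adv s := by
  induction t with
  | zero => rw [Nat.le_zero.1 h]; rfl
  | succ t ih =>
    rcases h.lt_or_eq with h | rfl
    · rw [runHist, List.take_append_of_le_length (by rw [length_runHist]; omega), ih (by omega)]
    · rw [List.take_of_length_le (length_runHist S adv _).le]

end Runs

lemma update_apply_of_lt {n : ℕ} {K j : Fin n} {base : Fin n → Equiv.Perm (Fin n)}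
    {q : Equiv.Perm (Fin n)} (hj : j < K) : Function.update base K q j = base j :=
  Function.update_of_ne hj.ne _ _

section OneMan

open scoped Classical

variable {n : ℕ} [NeZero n] (S : Strategy n) (K : Fin n) (base : Fin n → Equiv.Perm (Fin n))

/-- A proposal with this property is a guess of `K`'s partner, since `sdMatch base j` for `j < K`
does not depend on `K`'s list. -/
def PrefixOK (M : Equiv.Perm (Fin n)) : Prop := ∀ j < K, M.symm j = sdMatch base j

noncomputable def histWith (q : Equiv.Perm (Fin n)) (t : ℕ) : Hist n :=
  runHist S (adversary (Function.update base K q)) t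

def IsGuessRound (q : Equiv.Perm (Fin n)) (t : ℕ) : Prop :=
  PrefixOK K base (S (histWith S K base q t))

def IsHit (q : Equiv.Perm (Fin n)) (t : ℕ) : Prop :=
  IsGuessRound S K base q t ∧ relRank q (remaining base K) ((S (histWith S K base q t)).symm K) = 0

noncomputable def firstHit (q : Equiv.Perm (Fin n)) : ℕ := sInf {t | IsHit S K base q t}

noncomputable def numMisses (q : Equiv.Perm (Fin n)) : ℕ :=
  Nat.count (IsGuessRound S K base q) (firstHit S K base q)

/-- In each guess round the revealed woman comes immediately before the guessed partner in `K`'s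
list restricted to `remaining base K` (`immPredsHold_facts`). -/
noncomputable def facts (h : Hist n) : List (Fin n × Fin n) :=
  h.filterMap fun e => if PrefixOK K base e.1 then some (e.2.1, e.1.symm K) else none

noncomputable def guessHist (i : ℕ) (q : Equiv.Perm (Fin n)) : Hist n :=
  histWith S K base q (Nat.nth (IsGuessRound S K base q) i)

variable {S K base} {q q' : Equiv.Perm (Fin n)} {M : Equiv.Perm (Fin n)}

lemma remaining_update : remaining (Function.update base K q) K = remaining base K :=
  remaining_eq_of_le (fun _ => update_apply_of_lt) le_rfl

lemma sdMatch_update_self :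
    sdMatch (Function.update base K q) K = nthRel q (remaining base K) 0 := by
  rw [sdMatch, manPref_val, Function.update_self, remaining_update]

lemma partner_mem_remaining (hpre : PrefixOK K base M) : M.symm K ∈ remaining base K :=
  mem_remaining_of_prefix hpre (by simp)

lemma firstMismatch_update (hpre : PrefixOK K base M)
    (hmiss : relRank q (remaining base K) (M.symm K) ≠ 0) :
    firstMismatch (Function.update base K q) M = some K := by
  refine firstMismatch_eq_some_iff.2 ⟨fun h => hmiss ?_, fun i hi => ?_⟩
  · rw [sdMatch_update_self] at h
    exact (relRank_eq_zero_iff (partner_mem_remaining hpre)).2 h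
  · rw [hpre i hi, sdMatch_eq_of_lt (fun _ => update_apply_of_lt) hi]

lemma adversary_update_of_prefixOK (hpre : PrefixOK K base M)
    (hmiss : relRank q (remaining base K) (M.symm K) ≠ 0) (h : Hist n) :
    adversary (Function.update base K q) h M = (immPred q (remaining base K) (M.symm K), K) := by
  rw [adversary_of_firstMismatch (firstMismatch_update hpre hmiss), Function.update_self,
    remaining_update]

lemma adversary_update_of_not_prefixOK (hpre : ¬ PrefixOK K base M) (h : Hist n) :
    adversary (Function.update base K q) h M = adversary (Function.update base K q') h M := by
  refine adversary_congr (fun j hj => by rw [update_apply_of_lt hj, update_apply_of_lt hj]) ?_ h h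
  simp only [PrefixOK, not_forall] at hpre
  obtain ⟨j, hj, hne⟩ := hpre
  exact ⟨j, hj, by rwa [sdMatch_eq_of_lt (fun _ => update_apply_of_lt) hj]⟩

lemma histWith_zero : histWith S K base q 0 = [] := rfl

lemma histWith_succ (t : ℕ) : histWith S K base q (t + 1) = histWith S K base q t ++
    [(S (histWith S K base q t),
      adversary (Function.update base K q) (histWith S K base q t) (S (histWith S K base q t)))] :=
  rfl

lemma facts_histWith_succ (t : ℕ) : facts K base (histWith S K base q (t + 1)) =
    facts K base (histWith S K base q t) ++
      if IsGuessRound S K base q t then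
        [((adversary (Function.update base K q) (histWith S K base q t)
          (S (histWith S K base q t))).1, (S (histWith S K base q t)).symm K)]
      else [] := by
  rw [histWith_succ, facts, List.filterMap_append, ← facts]
  unfold IsGuessRound
  split_ifs <;> simp [*]

lemma length_facts_histWith (t : ℕ) :
    (facts K base (histWith S K base q t)).length = Nat.count (IsGuessRound S K base q) t := by
  induction t with
  | zero => rfl
  | succ t ih =>
    rw [facts_histWith_succ, List.length_append, ih, Nat.count_succ]
    split_ifs <;> rfl

lemma not_isHit_of_lt_firstHit {t : ℕ} (ht : t < firstHit S K base q) : ¬ IsHit S K base q t :=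
  Nat.notMem_of_lt_sInf ht

lemma le_firstHit {t : ℕ} (hex : ∃ s, IsHit S K base q s) (h : ∀ s < t, ¬ IsHit S K base q s) :
    t ≤ firstHit S K base q :=
  le_csInf hex fun _ hs => not_lt.1 fun hlt => h _ hlt hs

lemma immPredsHold_facts {t : ℕ} (ht : t ≤ firstHit S K base q) :
    ImmPredsHold q (remaining base K) (facts K base (histWith S K base q t)) := by
  induction t with
  | zero => simp [ImmPredsHold, histWith_zero, facts]
  | succ t ih =>
    intro f hf
    rw [facts_histWith_succ, List.mem_append] at hf
    rcases hf with hf | hf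
    · exact ih (by omega) f hf
    split_ifs at hf with hguess
    · have hmiss := fun h0 => not_isHit_of_lt_firstHit (by omega) ⟨hguess, h0⟩
      rw [List.mem_singleton, adversary_update_of_prefixOK hguess hmiss] at hf
      subst hf
      exact isImmPred_immPred (partner_mem_remaining hguess) hmiss
    · simp at hf

lemma histWith_eq_of_immPredsHold {t : ℕ} (ht : t ≤ firstHit S K base q)
    (h : ImmPredsHold q' (remaining base K) (facts K base (histWith S K base q t))) :
    histWith S K base q' t = histWith S K base q t ∧ ∀ s < t, ¬ IsHit S K base q' s := by
  induction t with
  | zero => exact ⟨by rw [histWith_zero, histWith_zero], fun _ h => absurd h (Nat.not_lt_zero _)⟩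
  | succ t ih =>
    rw [facts_histWith_succ] at h
    obtain ⟨hhist, hnohit⟩ := ih (by omega) fun f hf => h f (List.mem_append_left _ hf)
    have hguess_iff : IsGuessRound S K base q' t ↔ IsGuessRound S K base q t := by
      rw [IsGuessRound, IsGuessRound, hhist]
    by_cases hguess : IsGuessRound S K base q t
    · have hmiss := fun h0 => not_isHit_of_lt_firstHit (by omega) ⟨hguess, h0⟩
      have hfact := h _ (List.mem_append_right _ (by
        rw [if_pos hguess]; exact List.mem_singleton_self _))
      rw [adversary_update_of_prefixOK hguess hmiss] at hfact
      have hmiss' : relRank q' (remaining base K) ((S (histWith S K base q t)).symm K) ≠ 0 := by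
        have := hfact.2.2
        dsimp only at this
        omega
      refine ⟨?_, fun s hs => ?_⟩
      · rw [histWith_succ, histWith_succ, hhist, adversary_update_of_prefixOK hguess hmiss',
          adversary_update_of_prefixOK hguess hmiss, hfact.immPred_eq]
      · rcases Nat.lt_succ_iff_lt_or_eq.1 hs with hs | rfl
        exacts [hnohit s hs, fun hhit => hmiss' (by rw [IsHit, hhist] at hhit; exact hhit.2)]
    · refine ⟨?_, fun s hs => ?_⟩
      · rw [histWith_succ, histWith_succ, hhist, adversary_update_of_not_prefixOK hguess]
      · rcases Nat.lt_succ_iff_lt_or_eq.1 hs with hs | rfl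
        exacts [hnohit s hs, fun hhit => hguess (hguess_iff.1 hhit.1)]

end OneMan

section OneManCounting

open scoped Classical

variable {n : ℕ} [NeZero n] {S : Strategy n} {K : Fin n} {base : Fin n → Equiv.Perm (Fin n)}
  {q q₀ : Equiv.Perm (Fin n)} {i : ℕ}

lemma histWith_take {s t : ℕ} (h : s ≤ t) :
    (histWith S K base q t).take s = histWith S K base q s :=
  runHist_take _ _ h

lemma isHit_firstHit (hex : ∃ t, IsHit S K base q t) : IsHit S K base q (firstHit S K base q) :=
  Nat.sInf_mem hex

lemma guessRound_spec (hex : ∃ t, IsHit S K base q t) (hi : i ≤ numMisses S K base q) :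
    IsGuessRound S K base q (Nat.nth (IsGuessRound S K base q) i) ∧
      Nat.count (IsGuessRound S K base q) (Nat.nth (IsGuessRound S K base q) i) = i ∧
      Nat.nth (IsGuessRound S K base q) i ≤ firstHit S K base q :=
  nth_spec_of_le_count (isHit_firstHit hex).1 hi

lemma lt_numMisses_iff (hex : ∃ t, IsHit S K base q t) (hi : i ≤ numMisses S K base q) :
    i < numMisses S K base q ↔
      relRank q (remaining base K) ((S (guessHist S K base i q)).symm K) ≠ 0 := by
  obtain ⟨hguess, hcount, hle⟩ := guessRound_spec hex hi
  refine ⟨fun hlt h0 => not_isHit_of_lt_firstHit (Nat.nth_lt_of_lt_count hlt) ⟨hguess, h0⟩,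
    fun h0 => ?_⟩
  have hlt : Nat.nth (IsGuessRound S K base q) i < firstHit S K base q :=
    hle.lt_of_ne fun heq => h0 (by rw [guessHist, heq]; exact (isHit_firstHit hex).2)
  exact hcount ▸ Nat.count_strict_mono hguess hlt

lemma le_numMisses_and_guessHist_eq_iff (hex : ∀ q, ∃ t, IsHit S K base q t)
    (hi₀ : i ≤ numMisses S K base q₀) :
    i ≤ numMisses S K base q ∧ guessHist S K base i q = guessHist S K base i q₀ ↔
      ImmPredsHold q (remaining base K) (facts K base (guessHist S K base i q₀)) := by
  refine ⟨fun ⟨hi, heq⟩ => heq ▸ immPredsHold_facts (guessRound_spec (hex q) hi).2.2,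
    fun hfacts => ?_⟩
  obtain ⟨hguess₀, hcount₀, hle₀⟩ := guessRound_spec (hex q₀) hi₀
  obtain ⟨hhist, hnohit⟩ := histWith_eq_of_immPredsHold hle₀ hfacts
  set t₀ := Nat.nth (IsGuessRound S K base q₀) i
  have hround (s : ℕ) (hs : s ≤ t₀) :
      IsGuessRound S K base q s ↔ IsGuessRound S K base q₀ s := by
    rw [IsGuessRound, IsGuessRound, ← histWith_take hs, hhist, histWith_take hs]
  have hcount : Nat.count (IsGuessRound S K base q) t₀ = i := by
    rw [← hcount₀, Nat.count_eq_card_filter_range, Nat.count_eq_card_filter_range]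
    exact congrArg card (filter_congr fun s hs => hround s (mem_range.1 hs).le)
  have hnth : Nat.nth (IsGuessRound S K base q) i = t₀ :=
    hcount ▸ Nat.nth_count ((hround t₀ le_rfl).2 hguess₀)
  refine ⟨hcount ▸ Nat.count_monotone _ (le_firstHit (hex q) hnohit), ?_⟩
  rw [guessHist, hnth, hhist]
  rfl

lemma succ_le_numMisses_and_guessHist_eq_iff (hex : ∀ q, ∃ t, IsHit S K base q t)
    (hi₀ : i ≤ numMisses S K base q₀) :
    i + 1 ≤ numMisses S K base q ∧ guessHist S K base i q = guessHist S K base i q₀ ↔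
      ImmPredsHold q (remaining base K) (facts K base (guessHist S K base i q₀)) ∧
        relRank q (remaining base K) ((S (guessHist S K base i q₀)).symm K) ≠ 0 := by
  constructor
  · rintro ⟨hi, heq⟩
    have hmiss := (lt_numMisses_iff (hex q) (by omega)).1 hi
    rw [heq] at hmiss
    exact ⟨(le_numMisses_and_guessHist_eq_iff hex hi₀).1 ⟨by omega, heq⟩, hmiss⟩
  · rintro ⟨hF, h0⟩
    obtain ⟨hi, heq⟩ := (le_numMisses_and_guessHist_eq_iff hex hi₀).2 hF
    exact ⟨(lt_numMisses_iff (hex q) hi).2 (by rwa [heq]), heq⟩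

/-- One level of the survival bound: in each fibre of `guessHist i`, the `i`-th guess is right
for at most a `1 / (n - K - i)` fraction. -/
lemma hazard_step (hex : ∀ q, ∃ t, IsHit S K base q t) (i : ℕ) :
    (#(remaining base K) - i) * #{q | i ≤ numMisses S K base q}
      ≤ (#(remaining base K) - i) * #{q | i + 1 ≤ numMisses S K base q}
        + #{q | i ≤ numMisses S K base q} := by
  refine mul_card_le_of_forall_fiber (monotone_filter_right _ fun q hq => by omega)
    (guessHist S K base i) _ fun q₀ hq₀ => ?_
  simp only [mem_filter, mem_univ, true_and] at hq₀
  set F := facts K base (guessHist S K base i q₀) with hF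
  set g := (S (guessHist S K base i q₀)).symm K
  have hA : ({q ∈ {q | i ≤ numMisses S K base q} |
      guessHist S K base i q = guessHist S K base i q₀} : Finset (Equiv.Perm (Fin n))) =
      ({q | ImmPredsHold q (remaining base K) F} : Finset (Equiv.Perm (Fin n))) := by
    ext q
    simpa only [mem_filter, mem_univ, true_and] using le_numMisses_and_guessHist_eq_iff hex hq₀
  have hB : ({q ∈ {q | i + 1 ≤ numMisses S K base q} |
      guessHist S K base i q = guessHist S K base i q₀} : Finset (Equiv.Perm (Fin n))) =
      ({q | ImmPredsHold q (remaining base K) F ∧ relRank q (remaining base K) g ≠ 0} :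
        Finset (Equiv.Perm (Fin n))) := by
    ext q
    simpa only [mem_filter, mem_univ, true_and] using succ_le_numMisses_and_guessHist_eq_iff hex hq₀
  have hlen : F.length = i := by
    rw [hF, guessHist, length_facts_histWith, (guessRound_spec (hex q₀) hq₀).2.1]
  have hhaz := card_sub_length_mul_card_le (β := Fin n) F
    (partner_mem_remaining (guessRound_spec (hex q₀) hq₀).1 : g ∈ remaining base K)
  have hsplit := card_filter_add_card_filter_not
    (s := ({q | ImmPredsHold q (remaining base K) F} : Finset (Equiv.Perm (Fin n))))
    fun q => relRank q (remaining base K) g ≠ 0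
  simp only [filter_filter, not_not] at hsplit
  rw [hA, hB, ← hsplit, mul_add, hsplit, ← hlen]
  gcongr

lemma card_mul_le_two_mul_sum_numMisses (hex : ∀ q, ∃ t, IsHit S K base q t) :
    Fintype.card (Equiv.Perm (Fin n)) * (n - K - 1) ≤ 2 * ∑ q, numMisses S K base q := by
  have := card_mul_le_two_mul_sum_of_hazard univ (numMisses S K base) _
    fun i _ => hazard_step hex i
  rwa [card_univ, card_remaining K.isLt.le] at this

lemma isHit_of_isStable {t : ℕ}
    (h : IsStable (indexPrefs (Function.update base K q)) (S (histWith S K base q t))) :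
    IsHit S K base q t := by
  rw [isStable_iff] at h
  have hpre : IsGuessRound S K base q t := fun j hj => by
    rw [h j, sdMatch_eq_of_lt (fun _ => update_apply_of_lt) hj]
  refine ⟨hpre, (relRank_eq_zero_iff (partner_mem_remaining hpre)).2 ?_⟩
  rw [h K, sdMatch_update_self]

lemma numMisses_le_card_firstMismatch {T : ℕ}
    (hT : IsStable (indexPrefs (Function.update base K q)) (S (histWith S K base q T))) :
    numMisses S K base q ≤ #{s ∈ range T |
      firstMismatch (Function.update base K q) (S (histWith S K base q s)) = some K} := by
  have hle : firstHit S K base q ≤ T := Nat.sInf_le (isHit_of_isStable hT)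
  rw [numMisses, Nat.count_eq_card_filter_range]
  refine card_le_card fun s hs => ?_
  simp only [mem_filter, mem_range] at hs ⊢
  exact ⟨hs.1.trans_le hle,
    firstMismatch_update hs.2 fun h0 => not_isHit_of_lt_firstHit hs.1 ⟨hs.2, h0⟩⟩

end OneManCounting

section AllMen

lemma sum_sum_update {ι γ M : Type*} [Fintype ι] [DecidableEq ι] [Fintype γ]
    [AddCommMonoid M] (f : (ι → γ) → M) (i : ι) :
    ∑ x, ∑ c, f (Function.update x i c) = Fintype.card γ • ∑ x, f x := by
  let e : Equiv.Perm ((ι → γ) × γ) :=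
    Function.Involutive.toPerm (fun xc => (Function.update xc.1 i xc.2, xc.1 i)) fun xc => by simp
  rw [← Fintype.sum_prod_type', Fintype.sum_equiv e (fun xc => f (Function.update xc.1 i xc.2))
    (fun yc => f yc.1) fun _ => rfl, Fintype.sum_prod_type, smul_sum]
  simp [sum_const, card_univ]

lemma sum_card_filter_eq_some_le {κ : Type*} [Fintype κ] [DecidableEq κ] (g : ℕ → Option κ)
    (t : ℕ) : ∑ k, #{s ∈ range t | g s = some k} ≤ t := by
  have := card_eq_sum_card_fiberwise (s := range t) (t := univ) (f := g)
    fun _ _ => mem_coe.2 (mem_univ _)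
  rw [card_range, Fintype.sum_option] at this
  omega

variable {n : ℕ} [NeZero n] (S : Strategy n) {T : (Fin n → Equiv.Perm (Fin n)) → ℕ}

lemma card_mul_le_two_mul_sum_card_firstMismatch (K : Fin n)
    (hT : ∀ mp, IsStable (indexPrefs mp) (proposal S (adversary mp) (T mp))) :
    Fintype.card (Fin n → Equiv.Perm (Fin n)) * (n - K - 1) ≤
      2 * ∑ mp, #{s ∈ range (T mp) | firstMismatch mp (proposal S (adversary mp) s) = some K} := by
  set r : (Fin n → Equiv.Perm (Fin n)) → ℕ :=
    fun mp => #{s ∈ range (T mp) | firstMismatch mp (proposal S (adversary mp) s) = some K}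
  have hbase (base : Fin n → Equiv.Perm (Fin n)) :
      Fintype.card (Equiv.Perm (Fin n)) * (n - K - 1) ≤
        2 * ∑ q, r (Function.update base K q) := by
    have hstable (q : Equiv.Perm (Fin n)) := hT (Function.update base K q)
    calc _ ≤ 2 * ∑ q, numMisses S K base q := card_mul_le_two_mul_sum_numMisses
          fun q => ⟨_, isHit_of_isStable (hstable q)⟩
      _ ≤ _ := by
        gcongr with q
        exact numMisses_le_card_firstMismatch (hstable q)
  refine Nat.le_of_mul_le_mul_left ?_ (Fintype.card_pos (α := Equiv.Perm (Fin n)))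
  calc _ = ∑ _base : Fin n → Equiv.Perm (Fin n),
        Fintype.card (Equiv.Perm (Fin n)) * (n - K - 1) := by
        rw [sum_const, card_univ, smul_eq_mul]
        ring
    _ ≤ ∑ base, 2 * ∑ q, r (Function.update base K q) := sum_le_sum fun base _ => hbase base
    _ = _ := by
        rw [← mul_sum, sum_sum_update, smul_eq_mul]
        ring

lemma card_mul_le_four_mul_sum
    (hT : ∀ mp, IsStable (indexPrefs mp) (proposal S (adversary mp) (T mp))) :
    Fintype.card (Fin n → Equiv.Perm (Fin n)) * (n * (n - 1)) ≤ 4 * ∑ mp, T mp := by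
  have hsum : (∑ K : Fin n, (n - K - 1)) * 2 = n * (n - 1) := by
    rw [Fin.sum_univ_eq_sum_range (fun k => n - k - 1), ← sum_range_id_mul_two,
      ← sum_range_reflect (fun k => k) n]
    exact congrArg (· * 2) (sum_congr rfl fun k _ => by omega)
  calc _ = 2 * ∑ K : Fin n, Fintype.card (Fin n → Equiv.Perm (Fin n)) * (n - K - 1) := by
        rw [← hsum, ← mul_sum]
        ring
    _ ≤ 2 * ∑ K : Fin n, 2 * ∑ mp,
          #{s ∈ range (T mp) | firstMismatch mp (proposal S (adversary mp) s) = some K} :=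
        Nat.mul_le_mul_left _
          (sum_le_sum fun K _ => card_mul_le_two_mul_sum_card_firstMismatch S K hT)
    _ ≤ 4 * ∑ mp, T mp := by
        rw [← mul_sum, sum_comm, ← mul_assoc]
        exact Nat.mul_le_mul_left _ (sum_le_sum fun mp _ => sum_card_filter_eq_some_le _ _)

end AllMen

end CoarseQueryLowerBound

open CoarseQueryLowerBound in
theorem stmt8_general (n : ℕ) (hn : 3 ≤ n) :
    ∃ (wp : Equiv.Perm (Fin n))
      (adv : (Fin n → Equiv.Perm (Fin n)) → Adversary n),
      (∀ mp : Fin n → Equiv.Perm (Fin n),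
        ValidAdv ⟨fun _ => wp, mp⟩ (adv mp)) ∧
      ∀ S : Strategy n,
        ∀ T : (Fin n → Equiv.Perm (Fin n)) → ℕ,
          (∀ mp, IsStable ⟨fun _ => wp, mp⟩ (proposal S (adv mp) (T mp))) →
          (n : ℝ) ^ 2 / 9 ≤
            (∑ mp : Fin n → Equiv.Perm (Fin n), (T mp : ℝ)) /
              (Fintype.card (Fin n → Equiv.Perm (Fin n)) : ℝ) := by
  have : NeZero n := ⟨by omega⟩
  refine ⟨1, adversary, fun _ => adversary_valid, fun S T hT => ?_⟩
  have hcount : ((Fintype.card (Fin n → Equiv.Perm (Fin n)) * (n * (n - 1)) : ℕ) : ℝ)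
      ≤ ((4 * ∑ mp, T mp : ℕ) : ℝ) := by
    exact_mod_cast card_mul_le_four_mul_sum S hT
  push_cast [Nat.cast_sub (by omega : 1 ≤ n)] at hcount
  have hN : (0 : ℝ) < Fintype.card (Fin n → Equiv.Perm (Fin n)) := by
    exact_mod_cast Fintype.card_pos
  have hn' : (3 : ℝ) ≤ n := by exact_mod_cast hn
  have hquad : 4 * (n : ℝ) ^ 2 ≤ 9 * (n * (n - 1)) := by nlinarith
  rw [div_le_div_iff₀ (by norm_num) hN]
  nlinarith [mul_le_mul_of_nonneg_left hquad hN.le]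

/-- for every `n ≥ 3` divisible by 3, there exist a fixed common
preference order `wp` for all the women and an adversary (a response rule depending
on the realized men's preference profile and the history, valid for every realized
profile) such that for every deterministic learning strategy, the expected number of
matchings proposed before a stable matching is proposed — the expectation taken with
the men's preference orders i.i.d. uniform, i.e. uniform over all profiles
`mp : Fin n → Equiv.Perm (Fin n)` — is at least `n²/9`.  (For each realized profile
`mp`, `T mp` is any index of a stable proposal in the corresponding run, so that the
number of matchings proposed before a stable one is at most `T mp`.) -/
theorem stmt8 (n : ℕ) (hn : 3 ≤ n) (hdvd : 3 ∣ n) :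
    ∃ (wp : Equiv.Perm (Fin n))
      (adv : (Fin n → Equiv.Perm (Fin n)) → Adversary n),
      (∀ mp : Fin n → Equiv.Perm (Fin n),
        ValidAdv ⟨fun _ => wp, mp⟩ (adv mp)) ∧
      ∀ S : Strategy n,
        ∀ T : (Fin n → Equiv.Perm (Fin n)) → ℕ,
          (∀ mp, IsStable ⟨fun _ => wp, mp⟩ (proposal S (adv mp) (T mp))) →
          (n : ℝ) ^ 2 / 9 ≤
            (∑ mp : Fin n → Equiv.Perm (Fin n), (T mp : ℝ)) /
              (Fintype.card (Fin n → Equiv.Perm (Fin n)) : ℝ) :=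
  stmt8_general n hn
end

section
/- Let C be a set of constraints over a finite set A such that R(C) ≠ ∅. Then: (i) there exists z ∈ A such that no constraint of C has z as its first component; (ii) for any such z, the restricted constraint set C' = {(z', S) ∈ C : z ∉ S}, viewed as a set of constraints over A ∖ {z}, satisfies R(C') ≠ ∅; and (iii) for every linear order ≻' on A ∖ {z} satisfying all constraints of C', the linear order on A obtained from ≻' by placing z last satisfies all constraints of C. -/
/-!
Read a satisfying order from first to last. Its last element `z` precedes nothing, so it cannot
be the first component of a constraint. Deleting `z` keeps every constraint that does not
mention `z` satisfied, since relative positions survive the deletion. Conversely, appending `z`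
at the end of an order of `A ∖ {z}` keeps the old witnesses, and a constraint `(z', S)` with
`z ∈ S` is now witnessed by `z` itself.
-/

/-- A linear order on a finite set, represented as a duplicate-free list `l` covering
the set, satisfies the constraint `c = (z, S)` ("`z` must precede at least one element
of `S`") if `z` appears before some `s ∈ S` in `l`. -/
def SatC {A : Type} [DecidableEq A] (l : List A) (c : A × Finset A) : Prop :=
  ∃ s ∈ c.2, l.idxOf c.1 < l.idxOf s

namespace List

variable {α : Type*} [DecidableEq α] {l : List α} {a b : α}

theorem pair_sublist_of_idxOf_lt (hb : b ∈ l) (h : l.idxOf a < l.idxOf b) : [a, b] <+ l := by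
  induction l with
  | nil => simp at hb
  | cons c t ih =>
    have hbc : b ≠ c := by rintro rfl; simp at h
    have hbt : b ∈ t := (mem_cons.mp hb).resolve_left hbc
    by_cases hac : a = c
    · subst hac
      exact (singleton_sublist.mpr hbt).cons_cons a
    · rw [idxOf_cons_ne _ (Ne.symm hac), idxOf_cons_ne _ (Ne.symm hbc)] at h
      exact (ih hbt (Nat.succ_lt_succ_iff.mp h)).cons c

theorem Nodup.idxOf_lt_of_pair_sublist (hl : l.Nodup) (h : [a, b] <+ l) :
    l.idxOf a < l.idxOf b := by
  induction l with
  | nil => cases h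
  | cons c t ih =>
    obtain ⟨hct, hnt⟩ := nodup_cons.mp hl
    have hne : ∀ x ∈ t, c ≠ x := fun x hx hcx => hct (hcx ▸ hx)
    cases h with
    | cons _ h' =>
      rw [idxOf_cons_ne _ (hne a (h'.subset (by simp))),
        idxOf_cons_ne _ (hne b (h'.subset (by simp)))]
      exact Nat.succ_lt_succ (ih hnt h')
    | cons_cons _ h' =>
      rw [idxOf_cons_self, idxOf_cons_ne _ (hne b (h'.subset (by simp)))]
      exact Nat.succ_pos _

theorem Nodup.idxOf_erase_lt_idxOf_erase {z : α} (hl : l.Nodup) (hb : b ∈ l) (haz : a ≠ z)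
    (hbz : b ≠ z) (h : l.idxOf a < l.idxOf b) : (l.erase z).idxOf a < (l.erase z).idxOf b := by
  refine (hl.erase z).idxOf_lt_of_pair_sublist ?_
  simpa [erase_of_not_mem, haz.symm, hbz.symm] using (pair_sublist_of_idxOf_lt hb h).erase z

end List

section SatC

variable {A : Type} [DecidableEq A] {l : List A} {c : A × Finset A}

theorem SatC.fst_mem (h : SatC l c) : c.1 ∈ l := by
  obtain ⟨s, -, hlt⟩ := h
  exact List.idxOf_lt_length_iff.mp (hlt.trans_le List.idxOf_le_length)

theorem SatC.append (h : SatC l c) (l₂ : List A) : SatC (l ++ l₂) c := by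
  obtain ⟨s, hs, hlt⟩ := h
  refine ⟨s, hs, ?_⟩
  rw [List.idxOf_append_of_mem (SatC.fst_mem ⟨s, hs, hlt⟩)]
  by_cases hsl : s ∈ l
  · rwa [List.idxOf_append_of_mem hsl]
  · rw [List.idxOf_append_of_notMem hsl]
    have : l.idxOf s ≤ l.length := List.idxOf_le_length
    omega

theorem satC_append_of_notMem {s : A} (ha : c.1 ∈ l) (hs : s ∈ c.2) (hsl : s ∉ l)
    (l₂ : List A) : SatC (l ++ l₂) c := by
  refine ⟨s, hs, ?_⟩
  rw [List.idxOf_append_of_mem ha, List.idxOf_append_of_notMem hsl]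
  have := List.idxOf_lt_length_iff.mpr ha
  omega

theorem SatC.erase {z : A} (hl : l.Nodup) (h : SatC l c) (hmem : ∀ s ∈ c.2, s ∈ l)
    (hfst : c.1 ≠ z) (hz : z ∉ c.2) : SatC (l.erase z) c := by
  obtain ⟨s, hs, hlt⟩ := h
  exact ⟨s, hs, hl.idxOf_erase_lt_idxOf_erase (hmem s hs) hfst (ne_of_mem_of_not_mem hs hz) hlt⟩

theorem not_satC_of_forall_idxOf_le {z : A} (hz : ∀ a, l.idxOf a ≤ l.idxOf z) (S : Finset A) :
    ¬ SatC l (z, S) := fun ⟨s, _, hlt⟩ => (hz s).not_gt hlt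

end SatC

theorem stmt9_general {A : Type} [Fintype A] [DecidableEq A] [Nonempty A]
    (C : Set (A × Finset A))
    (hR : ∃ l : List A, l.Nodup ∧ l.toFinset = Finset.univ ∧ ∀ c ∈ C, SatC l c) :
    (∃ z : A, ∀ S : Finset A, (z, S) ∉ C) ∧
    (∀ z : A, (∀ S : Finset A, (z, S) ∉ C) →
      (∃ l' : List A, l'.Nodup ∧ l'.toFinset = Finset.univ.erase z ∧
        ∀ c ∈ C, z ∉ c.2 → SatC l' c) ∧
      (∀ l' : List A, l'.Nodup → l'.toFinset = Finset.univ.erase z →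
        (∀ c ∈ C, z ∉ c.2 → SatC l' c) →
        (l' ++ [z]).Nodup ∧ (l' ++ [z]).toFinset = Finset.univ ∧
          ∀ c ∈ C, SatC (l' ++ [z]) c)) := by
  obtain ⟨l, hnd, hcov, hsat⟩ := hR
  have hmem (a : A) : a ∈ l := by simp [← List.mem_toFinset, hcov]
  refine ⟨?_, fun z hz => ?_⟩
  · obtain ⟨z, hzmax⟩ := Finite.exists_max (l.idxOf ·)
    exact ⟨z, fun S hS => not_satC_of_forall_idxOf_le hzmax S (hsat _ hS)⟩
  have hfst {c : A × Finset A} (hc : c ∈ C) : c.1 ≠ z :=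
    fun h => hz c.2 (by rw [← h]; exact hc)
  refine ⟨?_, fun l' hnd' hcov' hsat' => ?_⟩
  · refine ⟨l.erase z, hnd.erase z, ?_, fun c hc hzc =>
      (hsat c hc).erase hnd (fun s _ => hmem s) (hfst hc) hzc⟩
    ext a
    simp [hnd.mem_erase_iff, hmem]
  · have hmem' (a : A) : a ∈ l' ↔ a ≠ z := by simp [← List.mem_toFinset, hcov']
    have hzl' : z ∉ l' := fun h => (hmem' z).mp h rfl
    refine ⟨hnd'.append (List.nodup_singleton z) (by simpa using hzl'), ?_, fun c hc => ?_⟩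
    · ext a
      by_cases haz : a = z <;> simp [haz, hmem']
    · by_cases hzc : z ∈ c.2
      · exact satC_append_of_notMem ((hmem' _).mpr (hfst hc)) hzc hzl' [z]
      · exact (hsat' c hc hzc).append [z]

/-- let `C` be a set of constraints over a finite set `A` (each
constraint `(z, S)` having `S` nonempty and `z ∉ S`) such that some linear order on
`A` satisfies all constraints of `C`.  Then:
(i) there is a `z ∈ A` appearing as the first component of no constraint of `C`;
(ii) for any such `z`, the restricted constraint set `C' = {(z',S) ∈ C : z ∉ S}`,
viewed over `A ∖ {z}`, is satisfiable by some linear order on `A ∖ {z}`; and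
(iii) for every linear order `l'` on `A ∖ {z}` satisfying all constraints of `C'`,
the linear order `l' ++ [z]` on `A` (placing `z` last) satisfies all constraints
of `C`. -/
theorem stmt9 {A : Type} [Fintype A] [DecidableEq A] [Nonempty A]
    (C : Set (A × Finset A))
    (hC : ∀ c ∈ C, c.2.Nonempty ∧ c.1 ∉ c.2)
    (hR : ∃ l : List A, l.Nodup ∧ l.toFinset = Finset.univ ∧ ∀ c ∈ C, SatC l c) :
    (∃ z : A, ∀ S : Finset A, (z, S) ∉ C) ∧
    (∀ z : A, (∀ S : Finset A, (z, S) ∉ C) →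
      (∃ l' : List A, l'.Nodup ∧ l'.toFinset = Finset.univ.erase z ∧
        ∀ c ∈ C, z ∉ c.2 → SatC l' c) ∧
      (∀ l' : List A, l'.Nodup → l'.toFinset = Finset.univ.erase z →
        (∀ c ∈ C, z ∉ c.2 → SatC l' c) →
        (l' ++ [z]).Nodup ∧ (l' ++ [z]).toFinset = Finset.univ ∧
          ∀ c ∈ C, SatC (l' ++ [z]) c)) :=
  stmt9_general C hR
end

section
/- Let φ be a 3-CNF boolean formula over variables x_1, …, x_n with clauses C_1, …, C_m, each a disjunction of exactly three literals. Consider the finite set A = {z_1, …, z_n, z̄_1, …, z̄_n, ŷ} of 2n + 1 elements, where the literal x_i corresponds to the element z_i and the literal ¬x_i corresponds to the element z̄_i. Then φ is satisfiable if and only if there exists a linear order ≻ on A such that: (i) for every i ∈ {1, …, n}, at least one of z_i, z̄_i precedes ŷ in ≻; and (ii) for every clause C_j = ℓ_{j,1} ∨ ℓ_{j,2} ∨ ℓ_{j,3}, ŷ precedes at least one of the three elements corresponding to ℓ_{j,1}, ℓ_{j,2}, ℓ_{j,3} in ≻. -/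
/-!
Rank the elements instead of ordering them: an order with the required properties is the same
as a ranking in which, for every variable, one of its two literals lies below `ŷ` and every clause
has a literal above `ŷ`. From an assignment, rank false literals below `ŷ` and true ones above it;
conversely, making `x_i` true exactly when `z_i` lies above `ŷ` satisfies every clause, since a
negative literal `z̄_i` above `ŷ` forces `z_i` below it. A ranking becomes an order by sorting.
-/

/-- `List.idxOf` on `Sum` uses the derived `BEq`, which core leaves without a `LawfulBEq` instance. -/
instance Sum.instLawfulBEq {α β : Type*} [BEq α] [LawfulBEq α] [BEq β] [LawfulBEq β] :
    LawfulBEq (α ⊕ β) where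
  rfl {x} := by
    cases x
    · exact beq_self_eq_true (α := α) _
    · exact beq_self_eq_true (α := β) _
  eq_of_beq {x y} h := by
    cases x <;> cases y
    · exact congrArg _ (eq_of_beq (α := α) h)
    · exact absurd h Bool.false_ne_true
    · exact absurd h Bool.false_ne_true
    · exact congrArg _ (eq_of_beq (α := β) h)

namespace List

variable {α β : Type*} [BEq α] [LawfulBEq α] [Preorder β]

theorem idxOf_lt_idxOf_of_pairwise {f : α → β} {l : List α}
    (hl : l.Pairwise fun a b => f a ≤ f b) {a b : α} (ha : a ∈ l) (hb : b ∈ l)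
    (hab : f a < f b) : l.idxOf a < l.idxOf b := by
  have ha' := idxOf_lt_length_iff.2 ha
  have hb' := idxOf_lt_length_iff.2 hb
  by_contra! hba
  rcases hba.lt_or_eq with hlt | heq
  · have := pairwise_iff_getElem.1 hl _ _ hb' ha' hlt
    rw [getElem_idxOf, getElem_idxOf] at this
    exact hab.not_ge this
  · have : a = b := by rw [← getElem_idxOf ha', ← getElem_idxOf hb']; simp only [heq]
    exact hab.ne (congrArg f this)

end List

theorem exists_nodup_enumeration_idxOf_lt_of_lt {α β : Type*} [Fintype α] [BEq α] [LawfulBEq α]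
    [LinearOrder β] (f : α → β) :
    ∃ l : List α, l.Nodup ∧ (∀ a, a ∈ l) ∧ ∀ a b, f a < f b → l.idxOf a < l.idxOf b := by
  let l := (Finset.univ : Finset α).toList.mergeSort fun a b => decide (f a ≤ f b)
  have hmem : ∀ a, a ∈ l := fun a => by simp [l]
  have hsorted : l.Pairwise fun a b => f a ≤ f b := by
    simpa using List.pairwise_mergeSort (le := fun a b => decide (f a ≤ f b))
      (by simpa using fun _ _ _ => le_trans) (by simpa using fun a b => le_total (f a) (f b)) _
  exact ⟨l, (List.mergeSort_perm _ _).nodup_iff.2 (Finset.nodup_toList _), hmem,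
    fun a b => List.idxOf_lt_idxOf_of_pairwise hsorted (hmem a) (hmem b)⟩

section Rank

variable {V ι κ β : Type*}

def Satisfiable (clause : ι → κ → V × Bool) : Prop :=
  ∃ v : V → Bool, ∀ j, ∃ k, v (clause j k).1 = (clause j k).2

/-- `Sum.inl (i, b)` stands for the element of the literal `(i, b)` and `Sum.inr ()` for `ŷ`. -/
def IsSatisfyingRank [Preorder β] (clause : ι → κ → V × Bool) (r : (V × Bool) ⊕ Unit → β) :
    Prop :=
  (∀ i, r (.inl (i, true)) < r (.inr ()) ∨ r (.inl (i, false)) < r (.inr ())) ∧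
    ∀ j, ∃ k, r (.inr ()) < r (.inl (clause j k))

theorem Satisfiable.exists_isSatisfyingRank {clause : ι → κ → V × Bool}
    (h : Satisfiable clause) : ∃ r : (V × Bool) ⊕ Unit → ℕ, IsSatisfyingRank clause r := by
  obtain ⟨v, hv⟩ := h
  refine ⟨fun | .inl (i, b) => if v i = b then 2 else 0 | .inr () => 1, fun i => ?_, fun j => ?_⟩
  · cases v i <;> simp
  · obtain ⟨k, hk⟩ := hv j
    exact ⟨k, by simp [hk]⟩

theorem IsSatisfyingRank.satisfiable [Preorder β] {clause : ι → κ → V × Bool}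
    {r : (V × Bool) ⊕ Unit → β} (hr : IsSatisfyingRank clause r) : Satisfiable clause := by
  classical
  refine ⟨fun i => decide (r (.inr ()) < r (.inl (i, true))), fun j => ?_⟩
  obtain ⟨k, hk⟩ := hr.2 j
  refine ⟨k, ?_⟩
  generalize clause j k = c at hk ⊢
  obtain ⟨i, b⟩ := c
  cases b
  · have : r (.inl (i, true)) < r (.inr ()) := (hr.1 i).resolve_right hk.asymm
    simpa using this.asymm
  · simpa using hk

end Rank

/-- let `φ` be a 3-CNF formula over variables `x_1, …, x_n` with `m`
clauses, each a disjunction of exactly three literals; a literal is encoded as a pair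
`(i, b) : Fin n × Bool` (`(i, true)` is `x_i`, `(i, false)` is `¬x_i`).  Consider the
finite set `A = (Fin n × Bool) ⊕ Unit` of `2n + 1` elements, where `Sum.inl (i, true)`
is the element `z_i`, `Sum.inl (i, false)` is `z̄_i`, and `Sum.inr ()` is `ŷ`.  Then
`φ` is satisfiable iff there is a linear order on `A` (a duplicate-free list covering
`A`, where `x ≻ y` means `x` appears earlier) such that (i) for each `i`, at least one
of `z_i, z̄_i` precedes `ŷ`, and (ii) for each clause, `ŷ` precedes at least one of the
three elements corresponding to its literals. -/
theorem stmt10 (n m : ℕ) (clause : Fin m → Fin 3 → Fin n × Bool) :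
    (∃ v : Fin n → Bool, ∀ j : Fin m, ∃ k : Fin 3,
        v (clause j k).1 = (clause j k).2) ↔
    (∃ l : List ((Fin n × Bool) ⊕ Unit),
      l.Nodup ∧ l.toFinset = Finset.univ ∧
      (∀ i : Fin n,
        l.idxOf (Sum.inl (i, true)) < l.idxOf (Sum.inr ()) ∨
        l.idxOf (Sum.inl (i, false)) < l.idxOf (Sum.inr ())) ∧
      (∀ j : Fin m, ∃ k : Fin 3,
        l.idxOf (Sum.inr ()) < l.idxOf (Sum.inl (clause j k)))) := by
  constructor
  · intro hsat
    obtain ⟨r, hvar, hcl⟩ := Satisfiable.exists_isSatisfyingRank hsat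
    obtain ⟨l, hnodup, hmem, hmono⟩ := exists_nodup_enumeration_idxOf_lt_of_lt r
    refine ⟨l, hnodup, Finset.eq_univ_iff_forall.2 fun a => List.mem_toFinset.2 (hmem a),
      fun i => (hvar i).imp (hmono _ _) (hmono _ _), fun j => ?_⟩
    obtain ⟨k, hk⟩ := hcl j
    exact ⟨k, hmono _ _ hk⟩
  · rintro ⟨l, -, -, hvar, hcl⟩
    exact IsSatisfyingRank.satisfiable (r := l.idxOf) ⟨hvar, hcl⟩
end

section
/- Let C be a set of constraints over a finite set A with |A| = n ≥ 1 and R(C) ≠ ∅. Then there exists a linear order ≻ on A such that every constraint (z, S) over A (with z ∈ A and S a nonempty subset of A ∖ {z}, not necessarily a member of C) that is satisfied by strictly more than a (1 − 1/n) fraction of the orders in R(C) is satisfied by ≻. -/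
open scoped Classical

/-- A linear order on `Fin N`, represented by a rank permutation `σ`
(`a ≻ b`, i.e. `a` precedes `b`, iff `σ a < σ b`), satisfies the constraint
`c = (z, S)` ("`z` must precede at least one element of `S`") if `σ z < σ s`
for some `s ∈ S`. -/
def SatP {N : ℕ} (σ : Equiv.Perm (Fin N)) (c : Fin N × Finset (Fin N)) : Prop :=
  ∃ s ∈ c.2, σ c.1 < σ s

/-- `R(C)`: the finite set of linear orders on `Fin N` satisfying all constraints
of `C`. -/
noncomputable def consOrders {N : ℕ} (C : Set (Fin N × Finset (Fin N))) :
    Finset (Equiv.Perm (Fin N)) :=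
  Finset.univ.filter fun σ => ∀ c ∈ C, SatP σ c

/-- `lastFrac C R a` is the fraction of orders in `R(C)` that rank `a` last among
the elements of `R`. -/
noncomputable def lastFrac {N : ℕ} (C : Set (Fin N × Finset (Fin N)))
    (R : Finset (Fin N)) (a : Fin N) : ℝ :=
  (((consOrders C).filter fun σ => ∀ b ∈ R, b ≠ a → σ b < σ a).card : ℝ) /
    ((consOrders C).card : ℝ)

namespace Stmt12Aux

variable {N : ℕ} (C : Set (Fin N × Finset (Fin N)))

/-- Number of orders in `R(C)` ranking `a` last among `R`. -/
noncomputable def cnt (R : Finset (Fin N)) (a : Fin N) : ℕ :=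
  ((consOrders C).filter fun σ => ∀ b ∈ R, b ≠ a → σ b < σ a).card

lemma sum_cnt (R : Finset (Fin N)) (hR : R.Nonempty) :
    (consOrders C).card = ∑ a ∈ R, cnt C R a := by
  classical
  have hf : ∀ τ : Equiv.Perm (Fin N), ∃ a ∈ R, ∀ b ∈ R, τ b ≤ τ a :=
    fun τ => R.exists_max_image τ hR
  set f : Equiv.Perm (Fin N) → Fin N := fun τ => (hf τ).choose with hfdef
  have hmem : ∀ τ, f τ ∈ R := fun τ => (hf τ).choose_spec.1
  have hmax : ∀ τ : Equiv.Perm (Fin N), ∀ b ∈ R, τ b ≤ τ (f τ) := fun τ => (hf τ).choose_spec.2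
  have hfib := Finset.card_eq_sum_card_fiberwise
    (f := f) (s := consOrders C) (t := R) (fun τ _ => hmem τ)
  rw [hfib]
  refine Finset.sum_congr rfl fun a ha => ?_
  unfold cnt
  congr 1
  apply Finset.filter_congr
  intro τ _
  constructor
  · intro h b hb hba
    subst h
    exact lt_of_le_of_ne (hmax τ b hb) (fun heq => hba (τ.injective heq))
  · intro h
    by_contra hne
    exact absurd (h (f τ) (hmem τ) hne) (not_lt.2 (hmax τ a ha))

lemma exists_good (R : Finset (Fin N)) (hR : R.Nonempty) :
    ∃ a ∈ R, (consOrders C).card ≤ cnt C R a * R.card := by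
  obtain ⟨a, ha, hmax⟩ := R.exists_max_image (cnt C R) hR
  refine ⟨a, ha, ?_⟩
  calc (consOrders C).card = ∑ b ∈ R, cnt C R b := sum_cnt C R hR
    _ ≤ ∑ _b ∈ R, cnt C R a := Finset.sum_le_sum (fun b hb => hmax b hb)
    _ = cnt C R a * R.card := by rw [Finset.sum_const, smul_eq_mul, mul_comm]

/-- Pick an element of `R` which is last among `R` in at least a `1/|R|` fraction
of the orders in `R(C)`. -/
noncomputable def pick [NeZero N] (R : Finset (Fin N)) : Fin N :=
  if h : R.Nonempty then (exists_good C R h).choose else default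

lemma pick_mem [NeZero N] (R : Finset (Fin N)) (h : R.Nonempty) : pick C R ∈ R := by
  rw [pick, dif_pos h]; exact (exists_good C R h).choose_spec.1

lemma pick_spec [NeZero N] (R : Finset (Fin N)) (h : R.Nonempty) :
    (consOrders C).card ≤ cnt C R (pick C R) * R.card := by
  rw [pick, dif_pos h]; exact (exists_good C R h).choose_spec.2

/-- The decreasing sequence of remaining elements: at each step remove the picked
element (which gets the last remaining rank). -/
noncomputable def seq [NeZero N] : ℕ → Finset (Fin N)
  | 0 => Finset.univ
  | k+1 => (seq k).erase (pick C (seq k))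

lemma seq_anti [NeZero N] : Antitone (seq C) :=
  antitone_nat_of_succ_le fun _ => Finset.erase_subset _ _

lemma seq_card [NeZero N] (k : ℕ) (hk : k ≤ N) : (seq C k).card = N - k := by
  induction k with
  | zero => simp [seq]
  | succ k ih =>
    have hk' : k ≤ N := by omega
    have hcard := ih hk'
    have hne : (seq C k).Nonempty := by
      rw [← Finset.card_pos, hcard]; omega
    rw [seq, Finset.card_erase_of_mem (pick_mem C _ hne), hcard]
    omega

lemma seq_nonempty [NeZero N] (k : ℕ) (hk : k < N) : (seq C k).Nonempty := by
  rw [← Finset.card_pos, seq_card C k (le_of_lt hk)]; omega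

end Stmt12Aux

open Stmt12Aux in
/-- let `C` be a set of constraints over `Fin N` (`N ≥ 1`, each
constraint `(z, S)` with `S` nonempty and `z ∉ S`) with `R(C) ≠ ∅`.  Then there is a
linear order `σ` such that every constraint `(z, S)` over `Fin N` (not necessarily a
member of `C`) which is satisfied by strictly more than a `1 − 1/N` fraction of the
orders in `R(C)` is satisfied by `σ`. -/
theorem stmt12 {N : ℕ} (hN : 1 ≤ N) (C : Set (Fin N × Finset (Fin N)))
    (hC : ∀ c ∈ C, c.2.Nonempty ∧ c.1 ∉ c.2)
    (hR : (consOrders C).Nonempty) :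
    ∃ σ : Equiv.Perm (Fin N),
      ∀ (z : Fin N) (S : Finset (Fin N)), S.Nonempty → z ∉ S →
        (1 - 1 / (N : ℝ)) * ((consOrders C).card : ℝ)
            < (((consOrders C).filter fun τ => SatP τ (z, S)).card : ℝ) →
        SatP σ (z, S) := by
  haveI : NeZero N := ⟨by omega⟩
  -- the element of rank `i` (0 = first) is the one picked at step `N-1-i`
  set e : Fin N → Fin N := fun i => pick C (seq C (N - 1 - i.val)) with he
  have he_mem : ∀ i : Fin N, e i ∈ seq C (N - 1 - i.val) := fun i =>
    pick_mem C _ (seq_nonempty C _ (by omega))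
  have he_not : ∀ i : Fin N, e i ∉ seq C (N - i.val) := by
    intro i
    have h1 : N - i.val = (N - 1 - i.val) + 1 := by omega
    rw [h1]
    exact Finset.notMem_erase _ _
  have hinj : Function.Injective e := by
    intro i j hij
    by_contra hne
    have hne' : i.val ≠ j.val := fun h => hne (Fin.ext h)
    rcases Nat.lt_or_ge i.val j.val with hlt | hge
    · have h1 : e i ∈ seq C (N - j.val) :=
        seq_anti C (show N - j.val ≤ N - 1 - i.val by omega) (he_mem i)
      rw [hij] at h1
      exact he_not j h1
    · have hlt : j.val < i.val := by omega
      have h1 : e j ∈ seq C (N - i.val) :=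
        seq_anti C (show N - i.val ≤ N - 1 - j.val by omega) (he_mem j)
      rw [← hij] at h1
      exact he_not i h1
  have hbij : Function.Bijective e := Finite.injective_iff_bijective.mp hinj
  set σp : Equiv.Perm (Fin N) := Equiv.ofBijective e hbij with hσp
  refine ⟨σp.symm, ?_⟩
  intro z S hS hzS hsat
  by_contra hnot
  set σ : Equiv.Perm (Fin N) := σp.symm with hσ
  set i : Fin N := σ z with hi
  have hz : e i = z := σp.apply_symm_apply z
  set R : Finset (Fin N) := seq C (N - 1 - i.val) with hRdef
  -- membership in R iff rank ≤ i
  have hmemiff : ∀ b : Fin N, b ∈ R ↔ σ b ≤ i := by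
    intro b
    have hb : e (σ b) = b := σp.apply_symm_apply b
    constructor
    · intro hbR
      by_contra hgt
      have hgt' : i < σ b := lt_of_not_ge hgt
      have hsub : R ⊆ seq C (N - (σ b).val) :=
        seq_anti C (by omega)
      have h2 : b ∈ seq C (N - (σ b).val) := hsub hbR
      have h3 := he_not (σ b)
      rw [hb] at h3
      exact h3 h2
    · intro hle
      have h1 : e (σ b) ∈ seq C (N - 1 - (σ b).val) := he_mem (σ b)
      have hsub : seq C (N - 1 - (σ b).val) ⊆ R :=
        seq_anti C (by omega)
      rw [hb] at h1
      exact hsub h1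
  have hzR : z ∈ R := (hmemiff z).2 le_rfl
  have hSR : ∀ s ∈ S, s ∈ R ∧ s ≠ z := by
    intro s hs
    have hns : ¬ σ z < σ s := fun h => hnot ⟨s, hs, h⟩
    exact ⟨(hmemiff s).2 (le_of_not_gt hns), fun h => hzS (h ▸ hs)⟩
  have hRcard : R.card = i.val + 1 := by
    rw [hRdef, seq_card C _ (by omega)]; omega
  have hRne : R.Nonempty := ⟨z, hzR⟩
  have hpickz : pick C R = z := hz
  have hpick : (consOrders C).card ≤ cnt C R z * R.card := by
    have := pick_spec C R hRne
    rwa [hpickz] at this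
  -- the orders in R(C) ranking z last among R all violate (z, S)
  set V := (consOrders C).filter fun τ => ¬ SatP τ (z, S) with hV
  have hFV : ((consOrders C).filter fun τ => ∀ b ∈ R, b ≠ z → τ b < τ z) ⊆ V := by
    intro τ hτ
    rw [Finset.mem_filter] at hτ ⊢
    refine ⟨hτ.1, ?_⟩
    rintro ⟨s, hs, hlt⟩
    obtain ⟨hsR, hsz⟩ := hSR s hs
    exact absurd hlt (not_lt.2 (le_of_lt (hτ.2 s hsR hsz)))
  have hcntV : cnt C R z ≤ V.card := Finset.card_le_card hFV
  have hRle : R.card ≤ N := by omega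
  have hVN : (consOrders C).card ≤ V.card * N :=
    le_trans hpick (Nat.mul_le_mul hcntV hRle)
  -- counting
  have hsum : ((consOrders C).filter fun τ => SatP τ (z, S)).card + V.card
      = (consOrders C).card := Finset.card_filter_add_card_filter_not _
  -- real arithmetic contradiction
  have hN0 : (0:ℝ) < N := by exact_mod_cast Nat.pos_of_ne_zero (by omega)
  have hVN' : ((consOrders C).card : ℝ) ≤ (V.card : ℝ) * N := by exact_mod_cast hVN
  have hsum' : (((consOrders C).filter fun τ => SatP τ (z, S)).card : ℝ) + V.card
      = ((consOrders C).card : ℝ) := by exact_mod_cast hsum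
  have h1N : (1 / (N:ℝ)) * N = 1 := by field_simp
  nlinarith [hsat, hVN', hsum', h1N, hN0,
    mul_lt_mul_of_pos_right hsat hN0]
end
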